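/- Let P and Q be finite nonempty posets. The duality condition L(P,Q)^∨ = L(Q,P)^τ holds if and only if (P is connected or Q is connected) and at least one of the following holds: (i) P and Q are both rooted; (ii) P and Q are both co-rooted; (iii) P is connected and Q is a direct sum of chains; (iv) Q is connected and P is a direct sum of chains; (v) P is a chain or Q is a chain. -/

import Mathlib

open MvPolynomial

/-- The ideal `L(P,Q)` generated by the monomials `u_φ = ∏_{p∈P} x_{p,φ(p)}`
over all isotone maps `φ : P → Q`. -/
noncomputable def isoL (P Q K : Type*) [PartialOrder P] [PartialOrder Q] [Fintype P]
    [Field K] : Ideal (MvPolynomial (P × Q) K) :=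
  Ideal.span { u | ∃ φ : P →o Q, u = ∏ p : P, X (p, φ p) }

/-- The Alexander dual `L(P,Q)^∨ = ⋂_{φ} (x_{p,φ(p)} : p ∈ P)`. -/
noncomputable def isoDual (P Q K : Type*) [PartialOrder P] [PartialOrder Q]
    [Field K] : Ideal (MvPolynomial (P × Q) K) :=
  ⨅ φ : P →o Q, Ideal.span { u | ∃ p : P, u = X (p, φ p) }

/-- The ideal `L(Q,P)^τ ⊆ K[x_{pq}]` generated by `∏_{q∈Q} x_{ψ(q),q}` for `ψ ∈ Hom(Q,P)`. -/
noncomputable def isoTau (P Q K : Type*) [PartialOrder P] [PartialOrder Q] [Fintype Q]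
    [Field K] : Ideal (MvPolynomial (P × Q) K) :=
  Ideal.span { u | ∃ ψ : Q →o P, u = ∏ q : Q, X (ψ q, q) }

/-- The prime ideal `𝔭_ψ = (x_{ψ(q),q} : q ∈ Q)`. -/
noncomputable def pPsi (P Q K : Type*) [PartialOrder P] [PartialOrder Q]
    [Field K] (ψ : Q →o P) : Ideal (MvPolynomial (P × Q) K) :=
  Ideal.span { u | ∃ q : Q, u = X (ψ q, q) }

/-- The height of an ideal: the infimum of the heights (in the prime spectrum)
of the prime ideals containing it. -/
noncomputable def idealHeight {R : Type*} [CommRing R] (I : Ideal R) : ℕ∞ :=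
  ⨅ J : {J : PrimeSpectrum R // I ≤ J.asIdeal}, Order.height J.1

/-- `P` is connected: any two elements are linked by a chain of comparabilities. -/
def PosetConnected (P : Type*) [PartialOrder P] : Prop :=
  ∀ a b : P, Relation.ReflTransGen (fun x y : P => x ≤ y ∨ y ≤ x) a b

/-- `P` is rooted: two incomparable elements have no common strict upper bound. -/
def Rooted (P : Type*) [PartialOrder P] : Prop :=
  ∀ p₁ p₂ p : P, ¬ p₁ ≤ p₂ → ¬ p₂ ≤ p₁ → ¬ (p₁ < p ∧ p₂ < p)

/-- `P` is co-rooted: two incomparable elements have no common strict lower bound. -/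
def CoRooted (P : Type*) [PartialOrder P] : Prop :=
  ∀ p₁ p₂ p : P, ¬ p₁ ≤ p₂ → ¬ p₂ ≤ p₁ → ¬ (p < p₁ ∧ p < p₂)

/-- `P` is a chain, i.e. totally ordered. -/
def IsChainPoset (P : Type*) [PartialOrder P] : Prop :=
  ∀ a b : P, a ≤ b ∨ b ≤ a

/-!
Both ideals are monomial ideals, so `L(P,Q)^∨ = L(Q,P)^τ` is a statement about supports: a set
`S ⊆ P × Q` meets the graph of every isotone `P → Q` iff it contains the transposed graph of an
isotone `Q → P` (`GraphDuality`). One direction says that every composite `ψ ∘ φ` has a fixed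
point. When `P` is rooted and one of the posets is connected, some minimal `r ∈ P` is connected
to `ψ (φ r)`, hence below it, and iterating `ψ ∘ φ` from `r` reaches a fixed point.

The other direction is a game on a rooted `P`: a labelling player climbs `P` along covers,
choosing non-decreasing labels in `Q` outside `S` (`Avoidable`). If he cannot start from some
`p₀`, then every blocked position climbs to a point of `S` that is still blocked, and these points
assemble into an isotone `ψ` when `Q` is rooted, or, when `P` is co-rooted, by taking the largest
blocked position on the chain above `p₀`. Two disconnected posets, or a non-rooted `P` with a
non-co-rooted `Q`, give explicit counterexamples; symmetry and order duality do the rest.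
-/

open Relation

def GraphDuality (P Q : Type*) [Preorder P] [Preorder Q] : Prop :=
  ∀ S : Set (P × Q), (∀ φ : P →o Q, ∃ p, (p, φ p) ∈ S) ↔ ∃ ψ : Q →o P, ∀ q, (ψ q, q) ∈ S

section GraphDuality
variable {P Q : Type*} [PartialOrder P] [PartialOrder Q]

lemma graphDuality_iff : GraphDuality P Q ↔
    (∀ (φ : P →o Q) (ψ : Q →o P), ∃ p, ψ (φ p) = p) ∧
      ∀ S : Set (P × Q), (∀ φ : P →o Q, ∃ p, (p, φ p) ∈ S) → ∃ ψ : Q →o P, ∀ q, (ψ q, q) ∈ S := by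
  refine ⟨fun h => ⟨fun φ ψ => ?_, fun S => (h S).1⟩, fun ⟨hfix, hsel⟩ S => ⟨hsel S, ?_⟩⟩
  · obtain ⟨p, q, hqp⟩ := (h (Set.range fun q => (ψ q, q))).2 ⟨ψ, fun q => ⟨q, rfl⟩⟩ φ
    obtain ⟨hψq, rfl⟩ := Prod.mk.inj hqp
    exact ⟨p, hψq⟩
  · rintro ⟨ψ, hψ⟩ φ
    obtain ⟨p, hp⟩ := hfix φ ψ
    exact ⟨p, by simpa [hp] using hψ (φ p)⟩

lemma GraphDuality.symm (h : GraphDuality P Q) : GraphDuality Q P := fun S => by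
  simpa using (h {x | x.swap ∉ S}).not.symm

lemma GraphDuality.of_dual (h : GraphDuality Pᵒᵈ Qᵒᵈ) : GraphDuality P Q := fun S => by
  have := h {x | (OrderDual.ofDual x.1, OrderDual.ofDual x.2) ∈ S}
  rw [OrderHom.dual.symm.forall_congr_left, OrderHom.dual.symm.exists_congr_left] at this
  simpa using this

lemma graphDuality_dual_iff : GraphDuality Pᵒᵈ Qᵒᵈ ↔ GraphDuality P Q :=
  ⟨GraphDuality.of_dual, GraphDuality.of_dual (P := Pᵒᵈ) (Q := Qᵒᵈ)⟩

end GraphDuality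

open Classical in
lemma sum_single_apply {P Q : Type*} [Fintype Q] (ψ : Q → P) (p : P) (q : Q) :
    (∑ q', Finsupp.single (ψ q', q') 1 : P × Q →₀ ℕ) (p, q) = if ψ q = p then 1 else 0 := by
  rw [Finsupp.finsetSum_apply, Finset.sum_eq_single q]
  · simp [Finsupp.single_apply]
  · intro q' _ hq'
    simp [hq']
  · simp

lemma sum_single_le_iff {P Q : Type*} [Fintype Q] (ψ : Q → P) (d : P × Q →₀ ℕ) :
    ∑ q, Finsupp.single (ψ q, q) 1 ≤ d ↔ ∀ q, d (ψ q, q) ≠ 0 := by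
  refine ⟨fun h q => ?_, fun h ⟨p, q⟩ => ?_⟩
  · have := h (ψ q, q)
    rw [sum_single_apply, if_pos rfl] at this
    omega
  · rw [sum_single_apply]
    split_ifs with hq
    · exact Nat.one_le_iff_ne_zero.2 (hq ▸ h q)
    · exact Nat.zero_le _

section Ideals
variable {P Q K : Type*} [PartialOrder P] [PartialOrder Q] [Field K]

lemma mem_isoDual_iff {f : MvPolynomial (P × Q) K} :
    f ∈ isoDual P Q K ↔ ∀ d ∈ f.support, ∀ φ : P →o Q, ∃ p, d (p, φ p) ≠ 0 := by
  have hgen (φ : P →o Q) : {u : MvPolynomial (P × Q) K | ∃ p, u = X (p, φ p)} =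
      X '' Set.range fun p => (p, φ p) := by
    ext; simp [eq_comm]
  simp only [isoDual, Submodule.mem_iInf, hgen, mem_ideal_span_X_image, Set.exists_range_iff]
  exact ⟨fun h d hd φ => h φ d hd, fun h φ d hd => h d hd φ⟩

lemma mem_isoTau_iff [Fintype Q] {f : MvPolynomial (P × Q) K} :
    f ∈ isoTau P Q K ↔ ∀ d ∈ f.support, ∃ ψ : Q →o P, ∀ q, d (ψ q, q) ≠ 0 := by
  have hgen : {u : MvPolynomial (P × Q) K | ∃ ψ : Q →o P, u = ∏ q, X (ψ q, q)} =
      (monomial · 1) '' Set.range fun ψ : Q →o P => ∑ q, Finsupp.single (ψ q, q) 1 := by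
    ext
    simp [monomial_sum_one, X, eq_comm]
  simp only [isoTau, hgen, mem_ideal_span_monomial_image, Set.exists_range_iff, sum_single_le_iff]

theorem isoDual_eq_isoTau_iff [Fintype P] [Fintype Q] :
    isoDual P Q K = isoTau P Q K ↔ GraphDuality P Q := by
  constructor
  · intro h S
    classical
    let d : P × Q →₀ ℕ := Finsupp.equivFunOnFinite.symm (S.indicator 1)
    have hd (x) : d x ≠ 0 ↔ x ∈ S := by simp [d, Set.indicator_apply]
    have hmem : monomial d (1 : K) ∈ isoDual P Q K ↔ monomial d (1 : K) ∈ isoTau P Q K := by rw [h]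
    simpa [mem_isoDual_iff, mem_isoTau_iff, support_monomial, hd] using hmem
  · intro h
    ext f
    rw [mem_isoDual_iff, mem_isoTau_iff]
    exact forall₂_congr fun d _ => h {x | d x ≠ 0}

end Ideals

section Shape
variable {P : Type*} [PartialOrder P]

lemma Rooted.le_or_le (h : Rooted P) {a b c : P} (hac : a ≤ c) (hbc : b ≤ c) :
    a ≤ b ∨ b ≤ a := by
  by_contra! hab
  exact h a b c hab.1 hab.2
    ⟨hac.lt_of_ne fun e => hab.2 (e ▸ hbc), hbc.lt_of_ne fun e => hab.1 (e ▸ hac)⟩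

lemma CoRooted.le_or_le (h : CoRooted P) {a b c : P} (hca : c ≤ a) (hcb : c ≤ b) :
    a ≤ b ∨ b ≤ a := by
  by_contra! hab
  exact h a b c hab.1 hab.2
    ⟨hca.lt_of_ne fun e => hab.1 (e ▸ hcb), hcb.lt_of_ne fun e => hab.2 (e ▸ hca)⟩

lemma Rooted.le_of_covBy (h : Rooted P) {a b c : P} (hab : a ⋖ b) (hcb : c < b) : c ≤ a := by
  rcases h.le_or_le hcb.le hab.le with hca | hac
  · exact hca
  · obtain hac | rfl := hac.lt_or_eq
    · exact (hab.2 hac hcb).elim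
    · exact le_rfl

lemma Rooted.le_of_reflTransGen (h : Rooted P) {r x : P} (hr : IsMin r)
    (hrx : ReflTransGen (SymmGen (· ≤ ·)) r x) : r ≤ x := by
  induction hrx with
  | refl => exact le_rfl
  | tail _ hyx ih =>
    rcases hyx with hyx | hxy
    · exact ih.trans hyx
    · exact (h.le_or_le ih hxy).elim id fun hxr => hr hxr

lemma IsChainPoset.of_connected (hc : PosetConnected P) (hr : Rooted P) (hco : CoRooted P) :
    IsChainPoset P := by
  intro a b
  induction hc a b with
  | refl => exact Or.inl le_rfl
  | tail _ hbc ih =>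
    rcases ih with hab | hba <;> rcases hbc with hbc | hcb
    · exact Or.inl (hab.trans hbc)
    · exact hr.le_or_le hab hcb
    · exact hco.le_or_le hba hbc
    · exact Or.inr (hcb.trans hba)

lemma IsChainPoset.rooted (h : IsChainPoset P) : Rooted P :=
  fun a b _ hab hba _ => (h a b).elim hab hba

lemma IsChainPoset.coRooted (h : IsChainPoset P) : CoRooted P :=
  fun a b _ hab hba _ => (h a b).elim hab hba

lemma IsChainPoset.connected (h : IsChainPoset P) : PosetConnected P :=
  fun a b => ReflTransGen.single (h a b)

lemma rooted_dual_iff : Rooted Pᵒᵈ ↔ CoRooted P :=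
  ⟨fun h a b c hab hba hc => h a b c hba hab hc, fun h a b c hab hba hc => h a b c hba hab hc⟩

lemma coRooted_dual_iff : CoRooted Pᵒᵈ ↔ Rooted P :=
  ⟨fun h a b c hab hba hc => h a b c hba hab hc, fun h a b c hab hba hc => h a b c hba hab hc⟩

lemma PosetConnected.dual (h : PosetConnected P) : PosetConnected Pᵒᵈ :=
  fun a b => ReflTransGen.mono (fun _ _ => Or.symm) _ _ (h a b)

end Shape

lemma Monotone.exists_fixedPt_of_le_map {α : Type*} [PartialOrder α] [WellFoundedGT α] {f : α → α}
    (hf : Monotone f) {x : α} (hx : x ≤ f x) : ∃ y, f y = y := by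
  obtain ⟨n, hn⟩ := WellFoundedGT.monotone_chain_condition
    ⟨fun n => f^[n] x, hf.monotone_iterate_of_le_map hx⟩
  refine ⟨f^[n] x, ?_⟩
  simpa [Function.iterate_succ_apply'] using (hn (n + 1) n.le_succ).symm

lemma Rooted.exists_map_map_eq {P Q : Type*} [PartialOrder P] [PartialOrder Q] [Finite P]
    [Nonempty Q] (hP : Rooted P) (hconn : PosetConnected P ∨ PosetConnected Q)
    (φ : P →o Q) (ψ : Q →o P) : ∃ p, ψ (φ p) = p := by
  obtain ⟨q₀⟩ := ‹Nonempty Q›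
  obtain ⟨r, hrq₀, hr⟩ := exists_minimal_le_of_wellFoundedLT (fun _ => True) (ψ q₀) trivial
  have hpath : ReflTransGen (SymmGen (· ≤ ·)) r (ψ (φ r)) := by
    rcases hconn with hcP | hcQ
    · exact hcP _ _
    · have hψ : ReflTransGen (SymmGen (· ≤ ·)) (ψ q₀) (ψ (φ r)) :=
        ReflTransGen.lift ψ (fun _ _ h => h.imp (ψ.mono ·) (ψ.mono ·)) _ _ (hcQ q₀ (φ r))
      exact ReflTransGen.head (.of_le hrq₀) hψ
  exact (ψ.mono.comp φ.mono).exists_fixedPt_of_le_map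
    (hP.le_of_reflTransGen (minimal_true.1 hr) hpath)

section Extension
variable {α β : Type*} [PartialOrder α] [Finite α] [Preorder β] (R : α → β → Prop)

lemma Rooted.exists_extend (hα : Rooted α) (hmin : ∀ a, IsMin a → ∃ b, R a b)
    (hcov : ∀ a a' b, a ⋖ a' → R a b → ∃ b', b ≤ b' ∧ R a' b')
    {m : α} {g : α → β} (hg : MonotoneOn g (Set.Iio m)) (hgR : ∀ a < m, R a (g a)) :
    ∃ b, R m b ∧ ∀ a < m, g a ≤ b := by
  by_cases hm : IsMin m
  · obtain ⟨b, hb⟩ := hmin m hm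
    exact ⟨b, hb, fun a ha => (hm.not_lt ha).elim⟩
  · obtain ⟨x, hx⟩ := not_isMin_iff.1 hm
    obtain ⟨a, -, ham⟩ := exists_le_covBy_of_lt hx
    obtain ⟨b, hab, hb⟩ := hcov a m (g a) ham (hgR a ham.lt)
    exact ⟨b, hb, fun c hc => (hg hc ham.lt (hα.le_of_covBy ham hc)).trans hab⟩

lemma Rooted.exists_orderHom [Nonempty β] (hα : Rooted α) (hmin : ∀ a, IsMin a → ∃ b, R a b)
    (hcov : ∀ a a' b, a ⋖ a' → R a b → ∃ b', b ≤ b' ∧ R a' b') :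
    ∃ f : α →o β, ∀ a, R a (f a) := by
  classical
  have := Fintype.ofFinite α
  suffices h : ∀ D : Finset α, IsLowerSet (D : Set α) →
      ∃ f : α → β, MonotoneOn f D ∧ ∀ a ∈ D, R a (f a) by
    obtain ⟨f, hf, hfR⟩ := h Finset.univ (by simpa using isLowerSet_univ)
    exact ⟨⟨f, by simpa using hf⟩, fun a => hfR a (Finset.mem_univ a)⟩
  intro D
  induction D using Finset.strongInduction with
  | H D ih =>
  intro hD
  obtain rfl | hne := D.eq_empty_or_nonempty
  · exact ⟨fun _ => Classical.arbitrary β, by simp [MonotoneOn], by simp⟩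
  obtain ⟨m, hm⟩ := D.exists_maximal hne
  have hlt : ∀ a, a < m → a ∈ D.erase m := fun a ha =>
    Finset.mem_erase.2 ⟨ha.ne, hD ha.le hm.1⟩
  have hD' : IsLowerSet (D.erase m : Set α) := by
    rw [Finset.coe_erase]
    exact hD.erase fun a ha hma => hm.eq_of_ge ha hma
  obtain ⟨g, hg, hgR⟩ := ih _ (D.erase_ssubset hm.1) hD'
  obtain ⟨b, hb, hgb⟩ := hα.exists_extend R hmin hcov
    (hg.mono fun a ha => hlt a ha) (fun a ha => hgR a (hlt a ha))
  refine ⟨Function.update g m b, ?_, ?_⟩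
  · intro x hx y hy hxy
    by_cases hym : y = m
    · subst hym
      by_cases hxm : x = y
      · simp [hxm]
      · simpa [hxm] using hgb x (hxy.lt_of_ne hxm)
    · have hxm : x ≠ m := fun e => hym (hm.eq_of_ge hy (e ▸ hxy))
      simpa [hxm, hym] using hg (Finset.mem_erase.2 ⟨hxm, hx⟩) (Finset.mem_erase.2 ⟨hym, hy⟩) hxy
  · intro a ha
    by_cases h : a = m
    · subst h; simpa using hb
    · simpa [h] using hgR a (Finset.mem_erase.2 ⟨h, ha⟩)

end Extension

section Avoidable
variable {P Q : Type*} [PartialOrder P] [WellFoundedGT P] [Preorder Q] (S : Set (P × Q))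

/-- The labelling player can label `p` by `q` and go on upwards along covers with non-decreasing
labels outside `S`. For rooted `P` the up-set of `p` is a tree, so this says that it has an
isotone labelling avoiding `S` with value `q` at `p`. -/
noncomputable def Avoidable : P → Q → Prop :=
  WellFoundedGT.fix fun p avoidable q =>
    (p, q) ∉ S ∧ ∀ p', (h : p ⋖ p') → ∃ q', q ≤ q' ∧ avoidable p' h.lt q'

lemma avoidable_iff {p : P} {q : Q} :
    Avoidable S p q ↔ (p, q) ∉ S ∧ ∀ p', p ⋖ p' → ∃ q', q ≤ q' ∧ Avoidable S p' q' := by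
  rw [Avoidable, WellFoundedGT.fix_eq]

def Blocked (p : P) (q : Q) : Prop :=
  ∀ q', q ≤ q' → ¬ Avoidable S p q'

variable {S}

lemma Blocked.mono {p : P} {q q' : Q} (h : Blocked S p q) (hq : q ≤ q') : Blocked S p q' :=
  fun _ h' => h _ (hq.trans h')

lemma Blocked.exists_le_mem {p : P} {q : Q} (h : Blocked S p q) :
    ∃ p', p ≤ p' ∧ Blocked S p' q ∧ (p', q) ∈ S := by
  induction p using WellFoundedGT.induction with
  | _ p ih =>
  by_cases hS : (p, q) ∈ S
  · exact ⟨p, le_rfl, h, hS⟩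
  · have hp : ¬ Avoidable S p q := h q le_rfl
    rw [avoidable_iff] at hp
    push Not at hp
    obtain ⟨p', hpp', hp'⟩ := hp hS
    obtain ⟨p'', hp'p'', h''⟩ := ih p' hpp'.lt hp'
    exact ⟨p'', hpp'.le.trans hp'p'', h''⟩

end Avoidable

section Transversal
variable {P Q : Type*} [PartialOrder P] [PartialOrder Q] [Finite P] {S : Set (P × Q)}

lemma Rooted.exists_forall_not_avoidable [Nonempty Q] (hP : Rooted P)
    (hS : ∀ φ : P →o Q, ∃ p, (p, φ p) ∈ S) : ∃ p₀, ∀ q, ¬ Avoidable S p₀ q := by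
  by_contra! h
  obtain ⟨φ, hφ⟩ := hP.exists_orderHom (Avoidable S) (fun p _ => h p)
    (fun p p' q hpp' hq => (avoidable_iff S).1 hq |>.2 p' hpp')
  obtain ⟨p, hp⟩ := hS φ
  exact ((avoidable_iff S).1 (hφ p)).1 hp

lemma Rooted.exists_orderHom_mem_of_blocked [Finite Q] [Nonempty P] (hQ : Rooted Q) {p₀ : P}
    (h₀ : ∀ q, Blocked S p₀ q) : ∃ ψ : Q →o P, ∀ q, (ψ q, q) ∈ S := by
  obtain ⟨ψ, hψ⟩ := hQ.exists_orderHom (fun q p => Blocked S p q ∧ (p, q) ∈ S)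
    (fun q _ => let ⟨p, _, hp⟩ := (h₀ q).exists_le_mem; ⟨p, hp⟩)
    (fun _ _ _ hqq' hp => (hp.1.mono hqq'.le).exists_le_mem)
  exact ⟨ψ, fun q => (hψ q).2⟩

lemma CoRooted.exists_orderHom_mem_of_blocked (hP : CoRooted P) {p₀ : P}
    (h₀ : ∀ q, Blocked S p₀ q) : ∃ ψ : Q →o P, ∀ q, (ψ q, q) ∈ S := by
  have hgreatest : ∀ q, ∃ p, p₀ ≤ p ∧ Blocked S p q ∧ ∀ p', p₀ ≤ p' → Blocked S p' q → p' ≤ p := by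
    intro q
    obtain ⟨p, ⟨hp₀, hpq⟩, hmax⟩ :=
      exists_maximal_of_wellFoundedGT (fun p => p₀ ≤ p ∧ Blocked S p q) ⟨p₀, le_rfl, h₀ q⟩
    refine ⟨p, hp₀, hpq, fun p' hp₀' hp'q => ?_⟩
    exact (hP.le_or_le hp₀ hp₀').elim (hmax ⟨hp₀', hp'q⟩) id
  choose ψ hψ₀ hψ hψmax using hgreatest
  refine ⟨⟨ψ, fun ⦃q q'⦄ hqq' => hψmax q' (ψ q) (hψ₀ q) ((hψ q).mono hqq')⟩, fun q => ?_⟩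
  obtain ⟨p, hψp, hp, hpS⟩ := (hψ q).exists_le_mem
  show (ψ q, q) ∈ S
  rwa [← le_antisymm (hψmax q p ((hψ₀ q).trans hψp) hp) hψp]

theorem Rooted.exists_orderHom_mem [Finite Q] [Nonempty P] [Nonempty Q] (hP : Rooted P)
    (h : Rooted Q ∨ CoRooted P) (hS : ∀ φ : P →o Q, ∃ p, (p, φ p) ∈ S) :
    ∃ ψ : Q →o P, ∀ q, (ψ q, q) ∈ S := by
  obtain ⟨p₀, hp₀⟩ := hP.exists_forall_not_avoidable hS
  have h₀ : ∀ q, Blocked S p₀ q := fun _ q' _ => hp₀ q'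
  exact h.elim (·.exists_orderHom_mem_of_blocked h₀) (·.exists_orderHom_mem_of_blocked h₀)

end Transversal

section Classification
variable {P Q : Type*} [PartialOrder P] [PartialOrder Q]

theorem Rooted.graphDuality [Finite P] [Finite Q] [Nonempty P] [Nonempty Q] (hP : Rooted P)
    (hconn : PosetConnected P ∨ PosetConnected Q) (h : Rooted Q ∨ CoRooted P) :
    GraphDuality P Q :=
  graphDuality_iff.2 ⟨hP.exists_map_map_eq hconn, fun _ => hP.exists_orderHom_mem h⟩

lemma GraphDuality.rooted_or_coRooted (h : GraphDuality P Q) : Rooted P ∨ CoRooted Q := by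
  by_contra! hPQ
  obtain ⟨a, b, c, hab, hba, hac, hbc⟩ : ∃ a b c : P, ¬ a ≤ b ∧ ¬ b ≤ a ∧ a < c ∧ b < c := by
    simpa [Rooted] using hPQ.1
  obtain ⟨x, y, z, hxy, hyx, hzx, hzy⟩ : ∃ x y z : Q, ¬ x ≤ y ∧ ¬ y ≤ x ∧ z < x ∧ z < y := by
    simpa [CoRooted] using hPQ.2
  -- `S` forces `ψ x` above `a` only, `ψ y` above `b` only, and `ψ z` above one of `a`, `b`.
  let S : Set (P × Q) := {s | (a ≤ s.1 ∨ b ≤ s.1) ∧ (x ≤ s.2 → a ≤ s.1) ∧ (y ≤ s.2 → b ≤ s.1) ∧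
    (a ≤ s.1 → b ≤ s.1 → x ≤ s.2 ∧ y ≤ s.2)}
  obtain ⟨ψ, hψ⟩ := (h S).1 fun φ => by
    by_cases hya : y ≤ φ a
    · by_cases hxb : x ≤ φ b
      · exact ⟨c, .inl hac.le, fun _ => hac.le, fun _ => hbc.le,
          fun _ _ => ⟨hxb.trans (φ.mono hbc.le), hya.trans (φ.mono hac.le)⟩⟩
      · exact ⟨b, .inr le_rfl, fun hx => (hxb hx).elim, fun _ => le_rfl, fun h => (hab h).elim⟩
    · exact ⟨a, .inl le_rfl, fun _ => le_rfl, fun hy => (hya hy).elim, fun _ h => (hba h).elim⟩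
  have hxa : a ≤ ψ x := (hψ x).2.1 le_rfl
  have hxb : ¬ b ≤ ψ x := fun hb => hyx ((hψ x).2.2.2 hxa hb).2
  have hyb : b ≤ ψ y := (hψ y).2.2.1 le_rfl
  have hya : ¬ a ≤ ψ y := fun ha => hxy ((hψ y).2.2.2 ha hyb).1
  rcases (hψ z).1 with hza | hzb
  · exact hya (hza.trans (ψ.mono hzy.le))
  · exact hxb (hzb.trans (ψ.mono hzx.le))

open Classical in
lemma monotone_ite_reflTransGen {α β : Type*} [Preorder α] [Preorder β] (a : α) (b c : β) :
    Monotone fun x => if ReflTransGen (SymmGen (· ≤ ·)) a x then b else c := by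
  intro x y hxy
  have : ReflTransGen (SymmGen (· ≤ ·)) a x ↔ ReflTransGen (SymmGen (· ≤ ·)) a y :=
    ⟨fun h => h.tail (.of_le hxy), fun h => h.tail (.of_ge hxy)⟩
  simp only [this, le_refl]

lemma GraphDuality.connected_or_connected (h : GraphDuality P Q) :
    PosetConnected P ∨ PosetConnected Q := by
  by_contra! hPQ
  simp only [PosetConnected, not_forall] at hPQ
  obtain ⟨⟨a, a', ha⟩, ⟨x, x', hx⟩⟩ : (∃ a a' : P, ¬ ReflTransGen (SymmGen (· ≤ ·)) a a') ∧
      ∃ x x' : Q, ¬ ReflTransGen (SymmGen (· ≤ ·)) x x' := hPQ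
  classical
  obtain ⟨p, hp⟩ := (graphDuality_iff.1 h).1 ⟨_, monotone_ite_reflTransGen a x' x⟩
    ⟨_, monotone_ite_reflTransGen x a a'⟩
  by_cases hap : ReflTransGen (SymmGen (· ≤ ·)) a p
  · simp only [OrderHom.coe_mk, if_pos hap, if_neg hx] at hp
    exact ha (hp ▸ hap)
  · simp only [OrderHom.coe_mk, if_neg hap, if_pos ReflTransGen.refl] at hp
    exact hap (hp ▸ .refl)

theorem graphDuality_iff_classification [Finite P] [Finite Q] [Nonempty P] [Nonempty Q] :
    GraphDuality P Q ↔
      ((PosetConnected P ∨ PosetConnected Q) ∧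
        ((Rooted P ∧ Rooted Q) ∨
         (CoRooted P ∧ CoRooted Q) ∨
         (PosetConnected P ∧ Rooted Q ∧ CoRooted Q) ∨
         (PosetConnected Q ∧ Rooted P ∧ CoRooted P) ∨
         (IsChainPoset P ∨ IsChainPoset Q))) := by
  constructor
  · intro h
    have h₁ := h.rooted_or_coRooted
    have h₂ := (graphDuality_dual_iff.2 h).rooted_or_coRooted
    rw [rooted_dual_iff, coRooted_dual_iff] at h₂
    have hconn := h.connected_or_connected
    have hchP := IsChainPoset.of_connected (P := P)
    have hchQ := IsChainPoset.of_connected (P := Q)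
    tauto
  · rintro ⟨hconn, ⟨hrP, hrQ⟩ | ⟨hcoP, hcoQ⟩ | ⟨-, hrQ, hcoQ⟩ | ⟨-, hrP, hcoP⟩ | hchP | hchQ⟩
    · exact hrP.graphDuality hconn (.inl hrQ)
    · exact graphDuality_dual_iff.1 <| (rooted_dual_iff.2 hcoP).graphDuality
        (hconn.imp .dual .dual) (.inl (rooted_dual_iff.2 hcoQ))
    · exact (hrQ.graphDuality hconn.symm (.inr hcoQ)).symm
    · exact hrP.graphDuality hconn (.inr hcoP)
    · exact hchP.rooted.graphDuality hconn (.inr hchP.coRooted)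
    · exact (hchQ.rooted.graphDuality hconn.symm (.inr hchQ.coRooted)).symm

end Classification

/-- Full classification: `L(P,Q)^∨ = L(Q,P)^τ` iff (`P` or `Q` is connected)
and one of: (i) both rooted; (ii) both co-rooted; (iii) `P` connected and `Q` a sum of chains;
(iv) `Q` connected and `P` a sum of chains; (v) `P` or `Q` is a chain. -/
theorem stmt_8 (P Q K : Type*) [PartialOrder P] [PartialOrder Q]
    [Fintype P] [Fintype Q] [Nonempty P] [Nonempty Q] [Field K] :
    isoDual P Q K = isoTau P Q K ↔
      ((PosetConnected P ∨ PosetConnected Q) ∧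
        ((Rooted P ∧ Rooted Q) ∨
         (CoRooted P ∧ CoRooted Q) ∨
         (PosetConnected P ∧ Rooted Q ∧ CoRooted Q) ∨
         (PosetConnected Q ∧ Rooted P ∧ CoRooted P) ∨
         (IsChainPoset P ∨ IsChainPoset Q))) :=
  isoDual_eq_isoTau_iff.trans graphDuality_iff_classification
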